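/- For every real k₁ ∈ (0,2) and every real k₂ ≥ 0 there exists a constant C > 0 such that for all r > 2: (ln r)·∫₂^r τ^{1−k₁}(ln τ)^{k₂} dτ − ∫₂^r τ^{1−k₁}(ln τ)^{k₂+1} dτ ≤ C r^{2−k₁}(ln r)^{k₂}. -/

import Mathlib

/-!
Write the left-hand side as `∫₂^r τ^(1-k₁) (ln τ)^k₂ ln(r/τ) dτ`. Bounding `(ln τ)^k₂ ≤ (ln r)^k₂` and
`ln(r/τ) ≤ (r/τ)^a / a` with `a = (2 - k₁)/2` leaves `∫₂^r τ^(-k₁/2) dτ ≤ r^a / a`, so the whole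
expression is at most `a⁻² r^(2-k₁) (ln r)^k₂`.
-/

open Real

section

variable {p q b r : ℝ}

lemma intervalIntegrable_rpow_mul_log_rpow (hq : 0 ≤ q) (hb : 0 < b) (hr : 0 < r) :
    IntervalIntegrable (fun τ => τ ^ p * log τ ^ q) MeasureTheory.volume b r := by
  have hpos : ∀ τ ∈ Set.uIcc b r, τ ≠ 0 := fun τ hτ =>
    (lt_of_lt_of_le (lt_min hb hr) hτ.1).ne'
  refine ContinuousOn.intervalIntegrable ?_
  exact (continuousOn_id.rpow_const fun τ hτ => Or.inl (hpos τ hτ)).mul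
    ((continuousOn_log.mono hpos).rpow_const fun _ _ => Or.inr hq)

lemma log_mul_integral_sub_integral_eq (hq : 0 ≤ q) (hb : 1 ≤ b) (hbr : b ≤ r) :
    log r * (∫ τ in b..r, τ ^ p * log τ ^ q) - ∫ τ in b..r, τ ^ p * log τ ^ (q + 1) =
      ∫ τ in b..r, τ ^ p * log τ ^ q * log (r / τ) := by
  have hb0 : 0 < b := by linarith
  have hr0 : 0 < r := by linarith
  rw [← intervalIntegral.integral_const_mul, ← intervalIntegral.integral_sub
    ((intervalIntegrable_rpow_mul_log_rpow hq hb0 hr0).const_mul _)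
    (intervalIntegrable_rpow_mul_log_rpow (by linarith) hb0 hr0)]
  refine intervalIntegral.integral_congr fun τ hτ => ?_
  rw [Set.uIcc_of_le hbr] at hτ
  have hτ0 : 0 < τ := by linarith [hτ.1]
  rw [rpow_add' (log_nonneg (by linarith [hτ.1])) (by linarith), rpow_one,
    log_div hr0.ne' hτ0.ne']
  ring

lemma rpow_mul_log_rpow_mul_log_div_le {a τ : ℝ} (hq : 0 ≤ q) (ha : 0 < a) (hτ : 1 ≤ τ)
    (hτr : τ ≤ r) :
    τ ^ p * log τ ^ q * log (r / τ) ≤ log r ^ q * (r ^ a / a) * τ ^ (p - a) := by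
  have hτ0 : 0 < τ := by linarith
  have hlog_div : log (r / τ) ≤ r ^ a / a * τ ^ (-a) := by
    calc log (r / τ) ≤ (r / τ) ^ a / a := log_le_rpow_div (div_nonneg (by linarith) hτ0.le) ha
      _ = r ^ a / a * τ ^ (-a) := by
        rw [div_rpow (by linarith) hτ0.le, rpow_neg hτ0.le]
        ring
  have hlog_pow : log τ ^ q ≤ log r ^ q :=
    rpow_le_rpow (log_nonneg hτ) (log_le_log hτ0 hτr) hq
  calc τ ^ p * log τ ^ q * log (r / τ)
      ≤ τ ^ p * log r ^ q * (r ^ a / a * τ ^ (-a)) := by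
        have : 0 ≤ log r := log_nonneg (by linarith)
        gcongr
        exact log_nonneg ((one_le_div hτ0).2 hτr)
      _ = log r ^ q * (r ^ a / a) * τ ^ (p - a) := by
        rw [sub_eq_add_neg, rpow_add hτ0]
        ring

lemma integral_rpow_mul_log_rpow_mul_log_div_le {a : ℝ} (hq : 0 ≤ q) (ha : 0 < a)
    (hpa : -1 < p - a) (hb : 1 ≤ b) (hbr : b ≤ r) :
    ∫ τ in b..r, τ ^ p * log τ ^ q * log (r / τ) ≤
      (a * (p - a + 1))⁻¹ * r ^ (p + 1) * log r ^ q := by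
  have hr0 : 0 < r := by linarith
  have hpa' : 0 < p - a + 1 := by linarith
  have hlog_div : ContinuousOn (fun τ => log (r / τ)) (Set.uIcc b r) := by
    rw [Set.uIcc_of_le hbr]
    have hτ0 : ∀ τ ∈ Set.Icc b r, τ ≠ 0 := fun τ hτ => (by linarith [hτ.1] : 0 < τ).ne'
    exact (continuousOn_const.div continuousOn_id hτ0).log fun τ hτ =>
      div_ne_zero hr0.ne' (hτ0 τ hτ)
  calc ∫ τ in b..r, τ ^ p * log τ ^ q * log (r / τ)
      ≤ ∫ τ in b..r, log r ^ q * (r ^ a / a) * τ ^ (p - a) :=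
        intervalIntegral.integral_mono_on hbr
          ((intervalIntegrable_rpow_mul_log_rpow hq (by linarith) hr0).mul_continuousOn hlog_div)
          ((intervalIntegral.intervalIntegrable_rpow' hpa).const_mul _)
          fun τ hτ => rpow_mul_log_rpow_mul_log_div_le hq ha (hb.trans hτ.1) hτ.2
    _ ≤ log r ^ q * (r ^ a / a) * (r ^ (p - a + 1) / (p - a + 1)) := by
        rw [intervalIntegral.integral_const_mul, integral_rpow (Or.inl hpa)]
        have : 0 ≤ log r ^ q * (r ^ a / a) := by
          have := log_nonneg (by linarith : 1 ≤ r); positivity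
        gcongr
        linarith [rpow_nonneg (by linarith : (0 : ℝ) ≤ b) (p - a + 1)]
    _ = (a * (p - a + 1))⁻¹ * r ^ (p + 1) * log r ^ q := by
        have hsplit : r ^ (p + 1) = r ^ a * r ^ (p - a + 1) := by
          rw [← rpow_add hr0]; ring_nf
        rw [hsplit]
        field_simp

end

theorem log_integral_cancellation
    (k₁ k₂ : ℝ) (hk₁ : k₁ ∈ Set.Ioo (0 : ℝ) 2) (hk₂ : 0 ≤ k₂) :
    ∃ C > (0 : ℝ), ∀ r : ℝ, 2 < r →
      Real.log r * (∫ τ in (2 : ℝ)..r, τ ^ (1 - k₁) * Real.log τ ^ k₂) -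
        (∫ τ in (2 : ℝ)..r, τ ^ (1 - k₁) * Real.log τ ^ (k₂ + 1)) ≤
          C * r ^ (2 - k₁) * Real.log r ^ k₂ := by
  have ha : 0 < (2 - k₁) / 2 := by linarith [hk₁.2]
  refine ⟨((2 - k₁) / 2 * ((2 - k₁) / 2))⁻¹, by positivity, fun r hr => ?_⟩
  rw [log_mul_integral_sub_integral_eq hk₂ one_le_two hr.le]
  convert integral_rpow_mul_log_rpow_mul_log_div_le (p := 1 - k₁) hk₂ ha (by linarith [hk₁.2])
    one_le_two hr.le using 4 <;> ring
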